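/- arXiv:2412.11977 — 2 statements merged into one kernel-verified Lean document; each statement's English description precedes it below -/
import Mathlib

section
/- Every even-chance SDS on strict preference profiles that is weakly strategyproof, ex post efficient, and Condorcet-consistent never returns the uniform lottery over a two-element set {x,y} unless x and y are in a majority tie (the same number of voters prefer x to y as y to x). -/
open Classical Finset

structure StrictPref (A : Type*) where
  rel : A → A → Prop
  trans : ∀ {a b c}, rel a b → rel b c → rel a c
  irrefl : ∀ a, ¬ rel a a
  total : ∀ a b, a ≠ b → rel a b ∨ rel b a

variable {A V : Type*} [Fintype A] [Fintype V]

/-- Probability assigned by `p` to the upper contour set of `x` w.r.t. strict relation `r`. -/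
noncomputable def probUC (p : A → ℝ) (r : A → A → Prop) (x : A) : ℝ :=
  ∑ y ∈ Finset.univ.filter (fun y => y = x ∨ r y x), p y

/-- `p` (weakly) stochastically dominates `q` w.r.t. `r`. -/
def SD (r : A → A → Prop) (p q : A → ℝ) : Prop :=
  ∀ x, probUC q r x ≤ probUC p r x

/-- `p` strictly stochastically dominates `q` w.r.t. `r`. -/
def StrictSD (r : A → A → Prop) (p q : A → ℝ) : Prop :=
  SD r p q ∧ ∃ x, probUC q r x < probUC p r x

def IsLottery (p : A → ℝ) : Prop := (∀ a, 0 ≤ p a) ∧ ∑ a, p a = 1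

/-- Weak strategyproofness of a social decision scheme on strict profiles. -/
def WeakSP (f : (V → StrictPref A) → A → ℝ) : Prop :=
  ∀ R R' : V → StrictPref A, ∀ i : V,
    (∀ j, j ≠ i → R j = R' j) → ¬ StrictSD (R i).rel (f R') (f R)

def IsTopOf (r : A → A → Prop) (x : A) : Prop := ∀ y, y ≠ x → r x y

noncomputable def unif (X : Finset A) : A → ℝ :=
  fun x => if x ∈ X then 1 / (X.card : ℝ) else 0

def EvenChance (f : (V → StrictPref A) → A → ℝ) : Prop :=
  ∀ R, ∃ X : Finset A, X.Nonempty ∧ f R = unif X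

def CondorcetWinner (R : V → StrictPref A) (x : A) : Prop :=
  ∀ y, y ≠ x →
    (Finset.univ.filter (fun i => (R i).rel y x)).card <
      (Finset.univ.filter (fun i => (R i).rel x y)).card

/-- On strict profiles an alternative is Pareto-dominated if some other alternative is
preferred to it by every voter; ex post efficiency gives such alternatives probability 0. -/
def ExPostEfficient (f : (V → StrictPref A) → A → ℝ) : Prop :=
  ∀ (R : V → StrictPref A) (x : A), (∃ y, ∀ i, (R i).rel y x) → f R x = 0

/-- An injective ranking of the alternatives. -/
noncomputable def rnk : A → ℕ := fun a => ((Fintype.equivFin A) a : ℕ)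

lemma rnk_inj : Function.Injective (rnk (A := A)) :=
  fun _ _ h => (Fintype.equivFin A).injective (Fin.val_injective h)

noncomputable def rho (a b : A) : A → ℕ :=
  fun z => if z = a then 0 else if z = b then 1 else rnk z + 2

lemma rho_self_a (a b : A) : rho a b a = 0 := by simp [rho]

lemma rho_self_b {a b : A} (hab : a ≠ b) : rho a b b = 1 := by
  simp [rho, Ne.symm hab]

lemma rho_other {a b z : A} (h1 : z ≠ a) (h2 : z ≠ b) : rho a b z = rnk z + 2 := by
  simp [rho, h1, h2]

lemma rho_eq_zero_iff {a b z : A} : rho a b z = 0 ↔ z = a := by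
  unfold rho
  split_ifs with h1 h2 <;> simp [h1]

lemma rho_pos {a b z : A} (h : z ≠ a) : 0 < rho a b z :=
  Nat.pos_of_ne_zero (fun hh => h (rho_eq_zero_iff.mp hh))

lemma rho_two {a b z : A} (h1 : z ≠ a) (h2 : z ≠ b) : 2 ≤ rho a b z := by
  rw [rho_other h1 h2]; omega

lemma rho_inj {a b : A} (hab : a ≠ b) : Function.Injective (rho a b) := by
  intro u v h
  by_cases hu : u = a <;> by_cases hv : v = a
  · exact hu.trans hv.symm
  · exfalso; rw [hu, rho_self_a] at h; exact hv (rho_eq_zero_iff.mp h.symm)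
  · exfalso; rw [hv, rho_self_a] at h; exact hu (rho_eq_zero_iff.mp h)
  · by_cases hub : u = b <;> by_cases hvb : v = b
    · exact hub.trans hvb.symm
    · exfalso; rw [hub, rho_self_b hab, rho_other hv hvb] at h; omega
    · exfalso; rw [hvb, rho_self_b hab, rho_other hu hub] at h; omega
    · rw [rho_other hu hub, rho_other hv hvb] at h; exact rnk_inj (by omega)

/-- The strict preference ranking `a ≻ b ≻ (everything else)`. -/
noncomputable def topTwo (a b : A) (hab : a ≠ b) : StrictPref A where
  rel z w := rho a b z < rho a b w
  trans h1 h2 := lt_trans h1 h2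
  irrefl _ := lt_irrefl _
  total z w h := lt_or_gt_of_ne (fun hh => h (rho_inj hab hh))

lemma topTwo_rel {a b : A} (hab : a ≠ b) (z w : A) :
    (topTwo a b hab).rel z w ↔ rho a b z < rho a b w := Iff.rfl
lemma filter_UC_a {a b : A} (hab : a ≠ b) :
    Finset.univ.filter (fun z => z = a ∨ (topTwo a b hab).rel z a) = {a} := by
  ext z
  simp only [Finset.mem_filter, Finset.mem_univ, true_and, Finset.mem_singleton,
    topTwo_rel, rho_self_a]
  constructor
  · rintro (h | h)
    · exact h
    · omega
  · intro h; exact Or.inl h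

lemma filter_UC_b {a b : A} (hab : a ≠ b) :
    Finset.univ.filter (fun z => z = b ∨ (topTwo a b hab).rel z b) = {a, b} := by
  ext z
  simp only [Finset.mem_filter, Finset.mem_univ, true_and, Finset.mem_insert,
    Finset.mem_singleton, topTwo_rel, rho_self_b hab]
  constructor
  · rintro (h | h)
    · exact Or.inr h
    · left
      have h0 : rho a b z = 0 := by omega
      exact rho_eq_zero_iff.mp h0
  · rintro (h | h)
    · subst h; right; rw [rho_self_a]; omega
    · exact Or.inl h

lemma probUC_topTwo_a {a b : A} (hab : a ≠ b) (p : A → ℝ) :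
    probUC p (topTwo a b hab).rel a = p a := by
  unfold probUC; rw [filter_UC_a hab, Finset.sum_singleton]

lemma probUC_topTwo_b {a b : A} (hab : a ≠ b) (p : A → ℝ) :
    probUC p (topTwo a b hab).rel b = p a + p b := by
  unfold probUC
  rw [filter_UC_b hab, Finset.sum_insert (by simp [hab]), Finset.sum_singleton]

lemma unif_mem {X : Finset A} {z : A} (h : z ∈ X) : unif X z = 1 / (X.card : ℝ) := if_pos h

lemma unif_not_mem {X : Finset A} {z : A} (h : z ∉ X) : unif X z = 0 := if_neg h

lemma unif_nonneg (X : Finset A) (z : A) : 0 ≤ unif X z := by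
  unfold unif
  split_ifs
  · exact div_nonneg zero_le_one (Nat.cast_nonneg _)
  · exact le_refl 0

lemma unif_sum (X : Finset A) (hX : X.Nonempty) : ∑ z, unif X z = 1 := by
  unfold unif
  rw [Finset.sum_ite_mem, Finset.univ_inter, Finset.sum_const, nsmul_eq_mul, mul_one_div,
    div_self]
  exact Nat.cast_ne_zero.mpr (Finset.card_ne_zero.mpr hX)

lemma unif_isLottery {X : Finset A} (hX : X.Nonempty) : IsLottery (unif X) :=
  ⟨unif_nonneg X, unif_sum X hX⟩

lemma unif_pair_left {a b : A} (hab : a ≠ b) : unif {a, b} a = 1 / 2 := by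
  rw [unif_mem (Finset.mem_insert_self a {b}), Finset.card_pair hab]; norm_num

lemma unif_single (a z : A) : unif {a} z = if z = a then (1 : ℝ) else 0 := by
  unfold unif; simp [Finset.mem_singleton]

lemma unif_pair_eq {a b : A} (hab : a ≠ b) (z : A) :
    unif {a, b} z = (if z = a then (1 : ℝ) / 2 else 0) + (if z = b then 1 / 2 else 0) := by
  unfold unif
  rw [Finset.card_pair hab]
  by_cases h1 : z = a
  · subst h1; simp [hab, Ne.symm hab]
  · by_cases h2 : z = b <;> simp [h1, h2, Ne.symm hab]

lemma probUC_le_one {p : A → ℝ} (hp : IsLottery p) (r : A → A → Prop) (w : A) :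
    probUC p r w ≤ 1 := by
  unfold probUC
  calc ∑ y ∈ Finset.univ.filter (fun y => y = w ∨ r y w), p y
      ≤ ∑ y, p y :=
        Finset.sum_le_sum_of_subset_of_nonneg (Finset.subset_univ _) (fun y _ _ => hp.1 y)
    _ = 1 := hp.2

lemma probUC_pair_topTwo {a b w : A} (hab : a ≠ b) (hw : w ≠ a) :
    probUC (unif {a, b}) (topTwo a b hab).rel w = 1 := by
  unfold probUC
  have hsum := unif_sum ({a, b} : Finset A) ⟨a, Finset.mem_insert_self a {b}⟩
  rw [← hsum]
  apply Finset.sum_subset (Finset.subset_univ _)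
  intro z _ hz
  simp only [Finset.mem_filter, Finset.mem_univ, true_and, not_or] at hz
  apply unif_not_mem
  simp only [Finset.mem_insert, Finset.mem_singleton]
  rintro (h | h)
  · subst h
    exact hz.2 (by rw [topTwo_rel, rho_self_a]; exact rho_pos hw)
  · by_cases hwb : w = b
    · exact hz.1 (h.trans hwb.symm)
    · apply hz.2
      rw [h, topTwo_rel, rho_self_b hab]
      have := rho_two hw hwb
      omega
lemma probUC_single (a : A) (r : A → A → Prop) (w : A) :
    probUC (unif {a}) r w = if (a = w ∨ r a w) then 1 else 0 := by
  unfold probUC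
  rw [Finset.sum_congr rfl (fun z _ => unif_single a z), Finset.sum_ite_eq' _ a (fun _ => (1:ℝ))]
  simp [Finset.mem_filter]

lemma probUC_pair {a b : A} (hab : a ≠ b) (r : A → A → Prop) (w : A) :
    probUC (unif {a, b}) r w =
      (if (a = w ∨ r a w) then (1 : ℝ) / 2 else 0) +
        (if (b = w ∨ r b w) then 1 / 2 else 0) := by
  unfold probUC
  rw [Finset.sum_congr rfl (fun z _ => unif_pair_eq hab z), Finset.sum_add_distrib,
    Finset.sum_ite_eq' _ a (fun _ => (1:ℝ)/2), Finset.sum_ite_eq' _ b (fun _ => (1:ℝ)/2)]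
  simp [Finset.mem_filter]

/-- The degenerate lottery on the better alternative strictly dominates the even-chance
lottery over the pair. -/
lemma dom_single (r : StrictPref A) {a b : A} (hr : r.rel a b) :
    StrictSD r.rel (unif {a}) (unif {a, b}) := by
  have hab : a ≠ b := fun h => r.irrefl a (h ▸ hr)
  constructor
  · intro w
    rw [probUC_single, probUC_pair hab]
    by_cases h : (a = w ∨ r.rel a w)
    · rw [if_pos h, if_pos h]
      split_ifs <;> norm_num
    · rw [if_neg h, if_neg h, if_neg]
      · norm_num
      · rintro (hb | hb)
        · exact h (Or.inr (hb ▸ hr))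
        · exact h (Or.inr (r.trans hr hb))
  · refine ⟨a, ?_⟩
    rw [probUC_single, probUC_pair hab]
    have h1 : (a = a ∨ r.rel a a) := Or.inl rfl
    rw [if_pos h1, if_pos h1, if_neg]
    · norm_num
    · rintro (hb | hb)
      · exact hab hb.symm
      · exact r.irrefl a (r.trans hr hb)

/-- If the outcome at the deviation is neither `{a}` nor `{a,b}`, the truthful pair
lottery strictly dominates it for the ranking `a ≻ b ≻ ⋯`. -/
lemma dom_pair_over_X {a b : A} (hab : a ≠ b) {X : Finset A} (hX : X.Nonempty)
    (h1 : X ≠ {a}) (h2 : X ≠ ({a, b} : Finset A)) :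
    StrictSD (topTwo a b hab).rel (unif {a, b}) (unif X) := by
  have hL := unif_isLottery hX
  have hXa : unif X a ≤ 1 / 2 := by
    by_cases ha : a ∈ X
    · rw [unif_mem ha]
      have hcard : 2 ≤ X.card := by
        rcases Nat.lt_or_ge X.card 2 with h | h
        · exfalso
          have hc1 : X.card = 1 := by
            have := Finset.card_pos.mpr hX; omega
          obtain ⟨c, hc⟩ := Finset.card_eq_one.mp hc1
          apply h1
          rw [hc]
          rw [hc, Finset.mem_singleton] at ha
          rw [ha]
        · exact h
      have : (1 : ℝ) / X.card ≤ 1 / 2 :=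
        one_div_le_one_div_of_le (by norm_num) (by exact_mod_cast hcard)
      exact this
    · rw [unif_not_mem ha]; norm_num
  constructor
  · intro w
    by_cases hw : w = a
    · subst hw
      rw [probUC_topTwo_a hab, probUC_topTwo_a hab, unif_pair_left hab]
      exact hXa
    · rw [probUC_pair_topTwo hab hw]
      exact probUC_le_one hL _ _
  · by_cases ha : a ∈ X
    · by_cases hb : b ∈ X
      · refine ⟨a, ?_⟩
        rw [probUC_topTwo_a hab, probUC_topTwo_a hab, unif_pair_left hab, unif_mem ha]
        have hc3 : 3 ≤ X.card := by
          by_contra hcon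
          push_neg at hcon
          have hsub : ({a, b} : Finset A) ⊆ X := by
            intro z hz
            rcases Finset.mem_insert.mp hz with h | h
            · rw [h]; exact ha
            · rw [Finset.mem_singleton.mp h]; exact hb
          exact h2 (Finset.eq_of_subset_of_card_le hsub (by
            rw [Finset.card_pair hab]; omega)).symm
        have h13 : (1 : ℝ) / X.card ≤ 1 / 3 :=
          one_div_le_one_div_of_le (by norm_num) (by exact_mod_cast hc3)
        linarith
      · refine ⟨b, ?_⟩
        rw [probUC_topTwo_b hab, probUC_pair_topTwo hab (Ne.symm hab), unif_not_mem hb]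
        linarith
    · refine ⟨a, ?_⟩
      rw [probUC_topTwo_a hab, probUC_topTwo_a hab, unif_pair_left hab, unif_not_mem ha]
      norm_num
/-- Key step: if a voter truthfully ranks `a` above `b`, the current outcome is the
even-chance lottery over `{a,b}`, and the voter switches to the ranking `a ≻ b ≻ ⋯`,
then the outcome stays the even-chance lottery over `{a,b}`. -/
lemma step_lemma {f : (V → StrictPref A) → A → ℝ} (hec : EvenChance f) (hSP : WeakSP f)
    {P P' : V → StrictPref A} {i : V} {a b : A} (hab : a ≠ b)
    (hdiff : ∀ j, j ≠ i → P j = P' j) (hPi : P' i = topTwo a b hab)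
    (hr : (P i).rel a b) (hfP : f P = unif {a, b}) : f P' = unif {a, b} := by
  obtain ⟨X, hXne, hfP'⟩ := hec P'
  by_cases hX1 : X = ({a, b} : Finset A)
  · rw [hfP', hX1]
  exfalso
  by_cases hX2 : X = {a}
  · have c1 := hSP P P' i hdiff
    rw [hfP, hfP', hX2] at c1
    exact c1 (dom_single (P i) hr)
  · have c2 := hSP P' P i (fun j hj => (hdiff j hj).symm)
    rw [hPi, hfP, hfP'] at c2
    exact c2 (dom_pair_over_X hab hXne hX2 hX1)

lemma not_strict_maj {f : (V → StrictPref A) → A → ℝ}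
    (hec : EvenChance f) (hSP : WeakSP f)
    (hCC : ∀ R x, CondorcetWinner R x → f R x = 1)
    (R : V → StrictPref A) (x y : A) (hxy : x ≠ y) (hf : f R = unif {x, y}) :
    ¬ ((Finset.univ.filter (fun i => (R i).rel y x)).card <
        (Finset.univ.filter (fun i => (R i).rel x y)).card) := by
  intro hlt
  set Rstar : V → StrictPref A := fun i =>
    if (R i).rel x y then topTwo x y hxy else topTwo y x hxy.symm with hRstar
  have key : ∀ S : Finset V, f (fun j => if j ∈ S then Rstar j else R j) = unif {x, y} := by
    intro S
    induction S using Finset.induction_on with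
    | empty =>
      have : (fun j => if j ∈ (∅ : Finset V) then Rstar j else R j) = R := by
        funext j; simp
      rw [this, hf]
    | @insert i S hiS ih =>
      have hdiff : ∀ j, j ≠ i →
          (fun j => if j ∈ S then Rstar j else R j) j =
            (fun j => if j ∈ insert i S then Rstar j else R j) j := by
        intro j hj
        by_cases hjS : j ∈ S <;> simp [hjS, hj]
      have hPi : (fun j => if j ∈ S then Rstar j else R j) i = R i := by simp [hiS]
      have hP'i : (fun j => if j ∈ insert i S then Rstar j else R j) i = Rstar i := by simp
      by_cases hxyi : (R i).rel x y
      · have hst : Rstar i = topTwo x y hxy := by simp [hRstar, hxyi]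
        exact step_lemma hec hSP hxy hdiff (hP'i.trans hst) (by rw [if_neg hiS]; exact hxyi) ih
      · have hyx : (R i).rel y x := ((R i).total x y hxy).resolve_left hxyi
        have hst : Rstar i = topTwo y x hxy.symm := by simp [hRstar, hxyi]
        have hres := step_lemma hec hSP hxy.symm hdiff (hP'i.trans hst)
          (by rw [if_neg hiS]; exact hyx) (by rw [ih, Finset.pair_comm])
        rw [hres, Finset.pair_comm]
  have hfinal : f Rstar = unif {x, y} := by
    have h := key Finset.univ
    have he : (fun j => if j ∈ (Finset.univ : Finset V) then Rstar j else R j) = Rstar := by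
      funext j; simp
    rwa [he] at h
  have hV : Nonempty V := by
    have hpos : 0 < (Finset.univ.filter (fun i => (R i).rel x y)).card :=
      Nat.lt_of_le_of_lt (Nat.zero_le _) hlt
    obtain ⟨i, _⟩ := Finset.card_pos.mp hpos
    exact ⟨i⟩
  have hcw : CondorcetWinner Rstar x := by
    intro z hz
    by_cases hzy : z = y
    · rw [hzy]
      have hiff1 : ∀ i, (Rstar i).rel y x ↔ (R i).rel y x := by
        intro i
        by_cases hi : (R i).rel x y
        · simp only [hRstar, if_pos hi]
          constructor
          · intro h
            exfalso
            rw [topTwo_rel, rho_self_a] at h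
            have := rho_self_b hxy
            omega
          · intro h
            exact absurd ((R i).trans h hi) ((R i).irrefl y)
        · have hyx := ((R i).total x y hxy).resolve_left hi
          simp only [hRstar, if_neg hi]
          constructor
          · intro _; exact hyx
          · intro _
            rw [topTwo_rel, rho_self_a, rho_self_b hxy.symm]
            omega
      have hiff2 : ∀ i, (Rstar i).rel x y ↔ (R i).rel x y := by
        intro i
        constructor
        · intro h
          by_contra hcon
          have hyx2 := ((R i).total x y hxy).resolve_left hcon
          have h2 := (hiff1 i).mpr hyx2
          exact absurd ((Rstar i).trans h h2) ((Rstar i).irrefl x)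
        · intro h
          have hnot : ¬ (Rstar i).rel y x := fun hc => ((R i).irrefl x)
            ((R i).trans h ((hiff1 i).mp hc))
          exact ((Rstar i).total x y hxy).resolve_right hnot
      have e1 : Finset.univ.filter (fun i => (Rstar i).rel y x) =
          Finset.univ.filter (fun i => (R i).rel y x) :=
        Finset.filter_congr (fun i _ => hiff1 i)
      have e2 : Finset.univ.filter (fun i => (Rstar i).rel x y) =
          Finset.univ.filter (fun i => (R i).rel x y) :=
        Finset.filter_congr (fun i _ => hiff2 i)
      rw [e1, e2]
      exact hlt
    · have hall : ∀ i, (Rstar i).rel x z ∧ ¬ (Rstar i).rel z x := by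
        intro i
        simp only [hRstar]
        split_ifs with hi
        · constructor
          · rw [topTwo_rel, rho_self_a]
            exact rho_pos hz
          · rw [topTwo_rel, rho_self_a]
            omega
        · constructor
          · rw [topTwo_rel, rho_self_b hxy.symm]
            have := rho_two hzy hz
            omega
          · rw [topTwo_rel, rho_self_b hxy.symm]
            have := rho_two hzy hz
            omega
      have h0 : Finset.univ.filter (fun i => (Rstar i).rel z x) = ∅ := by
        apply Finset.filter_eq_empty_iff.mpr
        intro i _
        exact (hall i).2
      have h1 : Finset.univ.filter (fun i => (Rstar i).rel x z) = Finset.univ := by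
        apply Finset.filter_eq_self.mpr
        intro i _
        exact (hall i).1
      rw [h0, h1, Finset.card_empty, Finset.card_univ]
      exact Fintype.card_pos
  have hone := hCC Rstar x hcw
  rw [hfinal, unif_pair_left hxy] at hone
  norm_num at hone
/-- A weakly strategyproof, ex post efficient, and Condorcet-consistent even-chance SDS
returns the uniform lottery over a two-element set `{x,y}` only if `x` and `y` are in a
majority tie. -/
theorem evenChance_pair_only_if_tie (f : (V → StrictPref A) → A → ℝ)
    (hec : EvenChance f) (hSP : WeakSP f) (heff : ExPostEfficient f)
    (hCC : ∀ R x, CondorcetWinner R x → f R x = 1) :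
    ∀ (R : V → StrictPref A) (x y : A), x ≠ y → f R = unif {x, y} →
      (Finset.univ.filter (fun i => (R i).rel x y)).card =
        (Finset.univ.filter (fun i => (R i).rel y x)).card := by

  intro R x y hxy hf
  have h1 := not_strict_maj hec hSP hCC R x y hxy hf
  have h2 := not_strict_maj hec hSP hCC R y x hxy.symm (by rw [hf, Finset.pair_comm])
  omega
end

section
/- Every weakly strategyproof and pairwise SDS on the domain of strict preference profiles with variable electorates satisfies set-monotonicity: if f(R,x) = 0 and R^{i:yx} is obtained from R by one voter swapping x down one position against y, then f(R) = f(R^{i:yx}). -/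
open Classical Finset

variable {A : Type*} [Fintype A]

/-- An SDS on the domain of strict preference profiles with variable (finite, nonempty)
electorates `N ⊆ ℕ`. -/
def VarSDS (A : Type*) : Type _ := (N : Finset ℕ) → ((i : ℕ) → i ∈ N → StrictPref A) → A → ℝ

/-- Majority margin of `x` over `y` in the profile `R` with electorate `N`. -/
noncomputable def margin (N : Finset ℕ) (R : (i : ℕ) → i ∈ N → StrictPref A) (x y : A) : ℤ :=
  ((N.attach.filter (fun i => (R i.1 i.2).rel x y)).card : ℤ) -
    ((N.attach.filter (fun i => (R i.1 i.2).rel y x)).card : ℤ)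

/-- `f` is pairwise: its outcome only depends on the pairwise majority margins. -/
def Pairwise' (f : VarSDS A) : Prop :=
  ∀ (N N' : Finset ℕ), N.Nonempty → N'.Nonempty →
    ∀ (R : (i : ℕ) → i ∈ N → StrictPref A) (R' : (i : ℕ) → i ∈ N' → StrictPref A),
      (∀ x y, margin N R x y = margin N' R' x y) → f N R = f N' R'

/-- Weak strategyproofness for variable electorates: within any fixed electorate, no
voter can obtain a strictly stochastically dominant lottery by misreporting. -/
def VarWeakSP (f : VarSDS A) : Prop :=
  ∀ (N : Finset ℕ), N.Nonempty →
    ∀ (R R' : (i : ℕ) → i ∈ N → StrictPref A) (i : ℕ) (hi : i ∈ N),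
      (∀ j (hj : j ∈ N), j ≠ i → R j hj = R' j hj) →
      ¬ StrictSD (R i hi).rel (f N R') (f N R)

/-- `R'` is obtained from `R` by voter `i` swapping the adjacent pair `x ≻ᵢ y`
to `y ≻ᵢ x` (reinforcing `y` against `x`). -/
def VarAdjSwap (N : Finset ℕ) (R : (i : ℕ) → i ∈ N → StrictPref A) (i : ℕ) (hi : i ∈ N)
    (x y : A) (R' : (i : ℕ) → i ∈ N → StrictPref A) : Prop :=
  x ≠ y ∧ (R i hi).rel x y ∧ (¬ ∃ z, (R i hi).rel x z ∧ (R i hi).rel z y) ∧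
  (∀ j (hj : j ∈ N), j ≠ i → R j hj = R' j hj) ∧ (R' i hi).rel y x ∧
  (∀ a b, ¬(a = x ∧ b = y) → ¬(a = y ∧ b = x) →
    ((R i hi).rel a b ↔ (R' i hi).rel a b))


section Helpers


theorem StrictPref.asymm {A : Type*} (r : StrictPref A) {a b : A} (h : r.rel a b) :
    ¬ r.rel b a := fun h' => r.irrefl a (r.trans h h')

def StrictPref.ofRank {A : Type*} (r : A → ℕ) (hr : Function.Injective r) : StrictPref A where
  rel a b := r a < r b
  trans := fun h1 h2 => h1.trans h2
  irrefl := fun _ => lt_irrefl _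
  total := fun _ _ hab => lt_or_gt_of_ne (fun h => hab (hr h))

def StrictPref.ofRankRev {A : Type*} (r : A → ℕ) (hr : Function.Injective r) : StrictPref A where
  rel a b := r b < r a
  trans := fun h1 h2 => h2.trans h1
  irrefl := fun _ => lt_irrefl _
  total := fun _ _ hab => (lt_or_gt_of_ne (fun h => hab (hr h))).symm

theorem nk_lt_iff {n a b ea eb : ℕ} (hea : ea < n) (heb : eb < n) :
    n * a + ea < n * b + eb ↔ (a < b ∨ (a = b ∧ ea < eb)) := by
  constructor
  · intro h
    rcases lt_trichotomy a b with h' | h' | h'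
    · exact Or.inl h'
    · subst h'; exact Or.inr ⟨rfl, by omega⟩
    · exfalso
      have h2 : n * (b + 1) ≤ n * a := Nat.mul_le_mul_left n h'
      rw [Nat.mul_succ] at h2
      omega
  · rintro (h' | ⟨rfl, h'⟩)
    · have h2 : n * (a + 1) ≤ n * b := Nat.mul_le_mul_left n h'
      rw [Nat.mul_succ] at h2
      omega
    · omega

theorem nk_le_iff {n a b ea eb : ℕ} (hea : ea < n) (heb : eb < n) :
    n * a + ea ≤ n * b + eb ↔ (a < b ∨ (a = b ∧ ea ≤ eb)) := by
  constructor
  · intro h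
    rcases lt_trichotomy a b with h' | h' | h'
    · exact Or.inl h'
    · subst h'; exact Or.inr ⟨rfl, by omega⟩
    · exfalso
      have h2 : n * (b + 1) ≤ n * a := Nat.mul_le_mul_left n h'
      rw [Nat.mul_succ] at h2
      omega
  · rintro (h' | ⟨rfl, h'⟩)
    · have h2 : n * (a + 1) ≤ n * b := Nat.mul_le_mul_left n h'
      rw [Nat.mul_succ] at h2
      omega
    · omega

open Classical in
noncomputable def blkv {A : Type*} (x y : A) (P : A → Prop) (kx ky : ℕ) (z : A) : ℕ :=
  if z = x then kx else if z = y then ky else if P z then 0 else 3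

noncomputable def bRank {A : Type*} [Fintype A] (x y : A) (P : A → Prop) (kx ky : ℕ) (z : A) : ℕ :=
  Fintype.card A * blkv x y P kx ky z + (Fintype.equivFin A z : ℕ)

theorem bRank_inj {A : Type*} [Fintype A] (x y : A) (P : A → Prop) (kx ky : ℕ) :
    Function.Injective (bRank x y P kx ky) := by
  intro a b hab
  have hea := (Fintype.equivFin A a).isLt
  have heb := (Fintype.equivFin A b).isLt
  unfold bRank at hab
  have h1 : ¬ (blkv x y P kx ky a < blkv x y P kx ky b ∨
      (blkv x y P kx ky a = blkv x y P kx ky b ∧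
        (Fintype.equivFin A a : ℕ) < (Fintype.equivFin A b : ℕ))) := by
    rw [← nk_lt_iff hea heb, hab]; exact lt_irrefl _
  have h2 : ¬ (blkv x y P kx ky b < blkv x y P kx ky a ∨
      (blkv x y P kx ky b = blkv x y P kx ky a ∧
        (Fintype.equivFin A b : ℕ) < (Fintype.equivFin A a : ℕ))) := by
    rw [← nk_lt_iff heb hea, hab]; exact lt_irrefl _
  have h3 : (Fintype.equivFin A a : ℕ) = (Fintype.equivFin A b : ℕ) := by omega
  exact (Fintype.equivFin A).injective (Fin.val_injective h3)

noncomputable def bPref {A : Type*} [Fintype A] (x y : A) (P : A → Prop) (kx ky : ℕ) :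
    StrictPref A := StrictPref.ofRank (bRank x y P kx ky) (bRank_inj x y P kx ky)

noncomputable def bPrefRev {A : Type*} [Fintype A] (x y : A) (P : A → Prop) (kx ky : ℕ) :
    StrictPref A := StrictPref.ofRankRev (bRank x y P kx ky) (bRank_inj x y P kx ky)

noncomputable def sgn {A : Type*} (r : StrictPref A) (x y : A) : ℤ :=
  (if r.rel x y then 1 else 0) - (if r.rel y x then 1 else 0)

theorem margin_eq_sum (N : Finset ℕ) (R : (i : ℕ) → i ∈ N → StrictPref A) (x y : A) :
    margin N R x y = ∑ j ∈ N, (if h : j ∈ N then sgn (R j h) x y else 0) := by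
  have key : ∀ (P : (i : ℕ) → i ∈ N → Prop),
      ((N.attach.filter (fun i => P i.1 i.2)).card : ℤ)
        = ∑ j ∈ N, (if h : j ∈ N then (if P j h then (1:ℤ) else 0) else 0) := by
    intro P
    rw [Finset.card_filter]
    push_cast
    rw [← Finset.sum_attach N (fun j => if h : j ∈ N then (if P j h then (1:ℤ) else 0) else 0)]
    refine Finset.sum_congr rfl ?_
    intro j _
    rw [dif_pos j.2]
  unfold margin
  rw [key (fun j hj => (R j hj).rel x y), key (fun j hj => (R j hj).rel y x),
    ← Finset.sum_sub_distrib]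
  refine Finset.sum_congr rfl ?_
  intro j hj
  rw [dif_pos hj, dif_pos hj, dif_pos hj]
  rfl

set_option linter.unusedSectionVars false

noncomputable def extProf {A : Type*} (N : Finset ℕ) (R : (i : ℕ) → i ∈ N → StrictPref A)
    (a b : ℕ) (ra rb : StrictPref A) :
    (j : ℕ) → j ∈ insert a (insert b N) → StrictPref A :=
  fun j hj =>
    if hja : j = a then ra
    else if hjb : j = b then rb
    else R j (by
      rcases Finset.mem_insert.mp hj with h | h
      · exact absurd h hja
      · rcases Finset.mem_insert.mp h with h' | h'
        · exact absurd h' hjb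
        · exact h')

theorem extProf_self {A : Type*} (N : Finset ℕ) (R : (i : ℕ) → i ∈ N → StrictPref A)
    (a b : ℕ) (ra rb : StrictPref A) (h : a ∈ insert a (insert b N)) :
    extProf N R a b ra rb a h = ra := dif_pos rfl

theorem extProf_snd {A : Type*} (N : Finset ℕ) (R : (i : ℕ) → i ∈ N → StrictPref A)
    (a b : ℕ) (ra rb : StrictPref A) (hba : b ≠ a) (h : b ∈ insert a (insert b N)) :
    extProf N R a b ra rb b h = rb := by
  unfold extProf
  rw [dif_neg hba, dif_pos rfl]

theorem extProf_mem {A : Type*} (N : Finset ℕ) (R : (i : ℕ) → i ∈ N → StrictPref A)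
    (a b : ℕ) (ra rb : StrictPref A) {j : ℕ} (hja : j ≠ a) (hjb : j ≠ b) (hj : j ∈ N)
    (h : j ∈ insert a (insert b N)) :
    extProf N R a b ra rb j h = R j hj := by
  unfold extProf
  rw [dif_neg hja, dif_neg hjb]

theorem margin_ext (N : Finset ℕ) (R : (i : ℕ) → i ∈ N → StrictPref A)
    (a b : ℕ) (ha : a ∉ N) (hb : b ∉ N) (hab : a ≠ b) (ra rb : StrictPref A) (u v : A) :
    margin (insert a (insert b N)) (extProf N R a b ra rb) u v
      = sgn ra u v + sgn rb u v + margin N R u v := by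
  have hanb : a ∉ insert b N := by simp [Finset.mem_insert, ha, hab]
  rw [margin_eq_sum, margin_eq_sum, Finset.sum_insert hanb, Finset.sum_insert hb]
  have h1 : (if h : a ∈ insert a (insert b N) then sgn (extProf N R a b ra rb a h) u v else 0)
      = sgn ra u v := by
    rw [dif_pos (Finset.mem_insert_self a _), extProf_self]
  have h2 : (if h : b ∈ insert a (insert b N) then sgn (extProf N R a b ra rb b h) u v else 0)
      = sgn rb u v := by
    rw [dif_pos (by simp : b ∈ insert a (insert b N)), extProf_snd _ _ _ _ _ _ (Ne.symm hab)]
  have h3 : ∑ j ∈ N, (if h : j ∈ insert a (insert b N) then sgn (extProf N R a b ra rb j h) u v else 0)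
      = ∑ j ∈ N, (if h : j ∈ N then sgn (R j h) u v else 0) := by
    refine Finset.sum_congr rfl ?_
    intro j hj
    have hja : j ≠ a := fun h => ha (h ▸ hj)
    have hjb : j ≠ b := fun h => hb (h ▸ hj)
    rw [dif_pos (by simp [hj] : j ∈ insert a (insert b N)), dif_pos hj,
      extProf_mem _ _ _ _ _ _ hja hjb hj]
  rw [h1, h2, h3]
  ring

theorem sgn_rev {A : Type*} [Fintype A] (x y : A) (P : A → Prop) (kx ky : ℕ) (u v : A) :
    sgn (bPrefRev x y P kx ky) u v = - sgn (bPref x y P kx ky) u v := by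
  simp only [sgn, bPref, bPrefRev, StrictPref.ofRank, StrictPref.ofRankRev]
  by_cases h1 : bRank x y P kx ky v < bRank x y P kx ky u <;>
    by_cases h2 : bRank x y P kx ky u < bRank x y P kx ky v <;> simp [h1, h2]

theorem blk_offpair {A : Type*} {x y : A} (hxy : x ≠ y) (P : A → Prop) (u v : A)
    (h1 : ¬(u = x ∧ v = y)) (h2 : ¬(u = y ∧ v = x)) :
    (blkv x y P 2 1 u < blkv x y P 2 1 v ↔ blkv x y P 1 2 u < blkv x y P 1 2 v) ∧
    (blkv x y P 2 1 u = blkv x y P 2 1 v ↔ blkv x y P 1 2 u = blkv x y P 1 2 v) := by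
  unfold blkv
  split_ifs <;> first | omega | tauto | simp_all

theorem bPref_rel_iff {A : Type*} [Fintype A] (x y : A) (P : A → Prop) (kx ky : ℕ) (a b : A) :
    (bPref x y P kx ky).rel a b ↔
      (blkv x y P kx ky a < blkv x y P kx ky b ∨
        (blkv x y P kx ky a = blkv x y P kx ky b ∧
          (Fintype.equivFin A a : ℕ) < (Fintype.equivFin A b : ℕ))) :=
  nk_lt_iff (Fintype.equivFin A a).isLt (Fintype.equivFin A b).isLt

theorem sgn_swap_diff {A : Type*} [Fintype A] {x y : A} (hxy : x ≠ y) (P : A → Prop) (u v : A) :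
    sgn (bPref x y P 2 1) u v - sgn (bPref x y P 1 2) u v
      = (if u = x ∧ v = y then (-2:ℤ) else if u = y ∧ v = x then 2 else 0) := by
  classical
  by_cases h1 : u = x ∧ v = y
  · obtain ⟨rfl, rfl⟩ := h1
    have ha : (bPref u v P 1 2).rel u v := by
      rw [bPref_rel_iff]; left; simp [blkv, Ne.symm hxy]
    have hb : ¬ (bPref u v P 1 2).rel v u := by
      rw [bPref_rel_iff]; simp [blkv, Ne.symm hxy]
    have hc : ¬ (bPref u v P 2 1).rel u v := by
      rw [bPref_rel_iff]; simp [blkv, Ne.symm hxy]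
    have hd : (bPref u v P 2 1).rel v u := by
      rw [bPref_rel_iff]; left; simp [blkv, Ne.symm hxy]
    simp [sgn, ha, hb, hc, hd, hxy]
  · by_cases h2 : u = y ∧ v = x
    · obtain ⟨rfl, rfl⟩ := h2
      have ha : ¬ (bPref v u P 1 2).rel u v := by
        rw [bPref_rel_iff]; simp [blkv, Ne.symm hxy]
      have hb : (bPref v u P 1 2).rel v u := by
        rw [bPref_rel_iff]; left; simp [blkv, Ne.symm hxy]
      have hc : (bPref v u P 2 1).rel u v := by
        rw [bPref_rel_iff]; left; simp [blkv, Ne.symm hxy]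
      have hd : ¬ (bPref v u P 2 1).rel v u := by
        rw [bPref_rel_iff]; simp [blkv, Ne.symm hxy]
      simp [sgn, ha, hb, hc, hd, hxy, Ne.symm hxy]
    · have hoff1 := blk_offpair hxy P u v h1 h2
      have hoff2 := blk_offpair hxy P v u (fun h => h2 ⟨h.2, h.1⟩) (fun h => h1 ⟨h.2, h.1⟩)
      have hr1 : (bPref x y P 2 1).rel u v ↔ (bPref x y P 1 2).rel u v := by
        rw [bPref_rel_iff, bPref_rel_iff, hoff1.1, hoff1.2]
      have hr2 : (bPref x y P 2 1).rel v u ↔ (bPref x y P 1 2).rel v u := by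
        rw [bPref_rel_iff, bPref_rel_iff, hoff2.1, hoff2.2]
      simp [sgn, hr1, hr2, h1, h2]

theorem probUC_bPref {A : Type*} [Fintype A] (x y : A) (P : A → Prop) (kx ky : ℕ)
    (g : A → ℝ) (z : A) :
    probUC g (bPref x y P kx ky).rel z
      = ∑ w ∈ Finset.univ.filter
          (fun w => bRank x y P kx ky w ≤ bRank x y P kx ky z), g w := by
  unfold probUC
  refine Finset.sum_congr ?_ (fun _ _ => rfl)
  refine Finset.filter_congr ?_
  intro w _
  show (w = z ∨ bRank x y P kx ky w < bRank x y P kx ky z) ↔ _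
  constructor
  · rintro (rfl | h)
    · exact le_refl _
    · exact le_of_lt h
  · intro h
    rcases lt_or_eq_of_le h with h' | h'
    · exact Or.inr h'
    · exact Or.inl (bRank_inj x y P kx ky h')

theorem sd_part {A : Type*} [Fintype A] {x y : A} (hxy : x ≠ y) {p q : A → ℝ}
    (hp0 : ∀ a, 0 ≤ p a) (hp1 : ∑ a, p a = 1) (hq0 : ∀ a, 0 ≤ q a) (hq1 : ∑ a, q a = 1)
    (hx0 : p x = 0) :
    SD (bPref x y (fun z => p z < q z) 1 2).rel q p := by
  classical
  intro z
  rw [probUC_bPref, probUC_bPref, ← sub_nonneg, ← Finset.sum_sub_distrib]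
  have he : ∀ w : A, (Fintype.equivFin A w : ℕ) < Fintype.card A :=
    fun w => (Fintype.equivFin A w).isLt
  set B : A → ℕ := blkv x y (fun z => p z < q z) 1 2 with hB
  set rk : A → ℕ := bRank x y (fun z => p z < q z) 1 2 with hrk
  have hrkB : ∀ w, rk w = Fintype.card A * B w + (Fintype.equivFin A w : ℕ) := by
    intro w; rw [hrk, hB]; rfl
  have hle : ∀ u v : A, rk u ≤ rk v ↔
      (B u < B v ∨ (B u = B v ∧ (Fintype.equivFin A u : ℕ) ≤ (Fintype.equivFin A v : ℕ))) := by
    intro u v; rw [hrkB u, hrkB v]; exact nk_le_iff (he u) (he v)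
  have hlt : ∀ u v : A, rk u < rk v ↔
      (B u < B v ∨ (B u = B v ∧ (Fintype.equivFin A u : ℕ) < (Fintype.equivFin A v : ℕ))) := by
    intro u v; rw [hrkB u, hrkB v]; exact nk_lt_iff (he u) (he v)
  have hBx : B x = 1 := by rw [hB]; simp [blkv]
  have hBy : B y = 2 := by rw [hB]; simp [blkv, Ne.symm hxy]
  have hBz : ∀ w, w ≠ x → w ≠ y → ((B w = 0 ∧ p w < q w) ∨ (B w = 3 ∧ q w ≤ p w)) := by
    intro w h1 h2
    rw [hB]
    by_cases hp : p w < q w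
    · left; exact ⟨by simp [blkv, h1, h2, hp], hp⟩
    · right; exact ⟨by simp [blkv, h1, h2, hp], le_of_not_gt hp⟩
  by_cases hz : B z ≤ 1
  · apply Finset.sum_nonneg
    intro w hw
    have hwle : rk w ≤ rk z := (Finset.mem_filter.mp hw).2
    have hBle : B w ≤ 1 := by
      rcases (hle w z).mp hwle with h | ⟨h, _⟩ <;> omega
    by_cases hwx : w = x
    · subst hwx
      rw [hx0]
      simpa using hq0 w
    · have hwy : w ≠ y := fun h => by rw [h, hBy] at hBle; omega
      rcases hBz w hwx hwy with ⟨_, hpq⟩ | ⟨h3, _⟩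
      · linarith
      · omega
  · have hsplit := Finset.sum_filter_add_sum_filter_not Finset.univ
      (fun w => rk w ≤ rk z) (fun w => q w - p w)
    have htot : ∑ w : A, (q w - p w) = 0 := by
      rw [Finset.sum_sub_distrib, hp1, hq1]; ring
    have hnegsum : ∑ w ∈ Finset.univ.filter (fun w => ¬ rk w ≤ rk z), (q w - p w) ≤ 0 := by
      apply Finset.sum_nonpos
      intro w hw
      have hwgt : rk z < rk w := lt_of_not_ge (Finset.mem_filter.mp hw).2
      have hBzw : B z ≤ B w := by
        rcases (hlt z w).mp hwgt with h | ⟨h, _⟩ <;> omega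
      have hwx : w ≠ x := fun h => by rw [h, hBx] at hBzw; omega
      have hwy : w ≠ y := by
        intro h
        rw [h, hBy] at hBzw
        have hz2 : B z = 2 := by omega
        by_cases hzx : z = x
        · rw [hzx, hBx] at hz2; omega
        by_cases hzy : z = y
        · rw [hzy, ← h] at hwgt; exact lt_irrefl _ hwgt
        rcases hBz z hzx hzy with ⟨h0, _⟩ | ⟨h3, _⟩ <;> omega
      rcases hBz w hwx hwy with ⟨h0, _⟩ | ⟨_, hqp⟩
      · omega
      · linarith
    linarith

theorem eq_of_probUC_eq {A : Type*} [Fintype A] (x y : A) (P : A → Prop) (p q : A → ℝ)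
    (h : ∀ z, probUC p (bPref x y P 1 2).rel z = probUC q (bPref x y P 1 2).rel z) :
    p = q := by
  classical
  have hT : ∀ m, ∑ w ∈ Finset.univ.filter
        (fun w => bRank x y P 1 2 w ≤ bRank x y P 1 2 m), p w
      = ∑ w ∈ Finset.univ.filter
        (fun w => bRank x y P 1 2 w ≤ bRank x y P 1 2 m), q w := by
    intro m; rw [← probUC_bPref, ← probUC_bPref]; exact h m
  set r : A → ℕ := bRank x y P 1 2 with hr
  have hrinj : Function.Injective r := bRank_inj x y P 1 2
  funext z
  have hTz : Finset.univ.filter (fun w => r w ≤ r z)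
      = insert z (Finset.univ.filter (fun w => r w < r z)) := by
    ext w
    simp only [Finset.mem_insert, Finset.mem_filter, Finset.mem_univ, true_and]
    constructor
    · intro h'
      rcases lt_or_eq_of_le h' with h'' | h''
      · exact Or.inr h''
      · exact Or.inl (hrinj h'')
    · rintro (rfl | h'')
      · exact le_refl _
      · exact le_of_lt h''
  have hzS : z ∉ Finset.univ.filter (fun w => r w < r z) := by simp
  have hS : ∑ w ∈ Finset.univ.filter (fun w => r w < r z), p w
      = ∑ w ∈ Finset.univ.filter (fun w => r w < r z), q w := by
    rcases Finset.eq_empty_or_nonempty (Finset.univ.filter (fun w => r w < r z)) with hE | hne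
    · rw [hE]; simp
    · obtain ⟨m, hm, hmax⟩ := Finset.exists_max_image _ r hne
      have hmlt : r m < r z := (Finset.mem_filter.mp hm).2
      have hSm : Finset.univ.filter (fun w => r w < r z)
          = Finset.univ.filter (fun w => r w ≤ r m) := by
        ext w
        simp only [Finset.mem_filter, Finset.mem_univ, true_and]
        constructor
        · intro h'; exact hmax w (by simp [h'])
        · intro h'; exact lt_of_le_of_lt h' hmlt
      rw [hSm]
      exact hT m
  have h1 := hT z
  rw [hTz, Finset.sum_insert hzS, Finset.sum_insert hzS] at h1
  linarith

end Helpers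

/-- Every weakly strategyproof and pairwise SDS (with variable electorates) satisfies
set-monotonicity: weakening an alternative receiving probability 0 does not change
the outcome. -/
theorem pairwise_weakSP_set_monotone (f : VarSDS A)
    (hlot : ∀ (N : Finset ℕ), N.Nonempty → ∀ R, IsLottery (f N R))
    (hpw : Pairwise' f) (hsp : VarWeakSP f) :
    ∀ (N : Finset ℕ), N.Nonempty →
      ∀ (R : (i : ℕ) → i ∈ N → StrictPref A) (i : ℕ) (hi : i ∈ N) (x y : A)
        (R' : (i : ℕ) → i ∈ N → StrictPref A),
        VarAdjSwap N R i hi x y R' → f N R x = 0 → f N R = f N R' := by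
  intro N hN R i hi x y R' hswap hx0
  obtain ⟨hxy, hRxy, -, hag, hR'yx, hoth⟩ := hswap
  classical
  obtain ⟨hp0, hp1⟩ := hlot N hN R
  obtain ⟨hq0, hq1⟩ := hlot N hN R'
  -- margins of R' in terms of R
  have hmarg : ∀ u v : A, margin N R' u v = margin N R u v +
      (if u = x ∧ v = y then (-2:ℤ) else if u = y ∧ v = x then 2 else 0) := by
    intro u v
    rw [margin_eq_sum, margin_eq_sum, ← Finset.add_sum_erase _ _ hi,
      ← Finset.add_sum_erase _ _ hi]
    have hrest : ∑ j ∈ N.erase i, (if h : j ∈ N then sgn (R' j h) u v else 0)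
        = ∑ j ∈ N.erase i, (if h : j ∈ N then sgn (R j h) u v else 0) := by
      refine Finset.sum_congr rfl ?_
      intro j hj
      obtain ⟨hji, hjN⟩ := Finset.mem_erase.mp hj
      rw [dif_pos hjN, dif_pos hjN, hag j hjN hji]
    rw [hrest, dif_pos hi, dif_pos hi]
    have hsgn : sgn (R' i hi) u v = sgn (R i hi) u v +
        (if u = x ∧ v = y then (-2:ℤ) else if u = y ∧ v = x then 2 else 0) := by
      by_cases h1 : u = x ∧ v = y
      · obtain ⟨rfl, rfl⟩ := h1
        simp [sgn, hRxy, hR'yx, (R i hi).asymm hRxy, (R' i hi).asymm hR'yx]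
      · by_cases h2 : u = y ∧ v = x
        · obtain ⟨rfl, rfl⟩ := h2
          simp [sgn, hRxy, hR'yx, (R i hi).asymm hRxy, (R' i hi).asymm hR'yx, Ne.symm hxy, hxy]
        · have e1 := hoth u v h1 h2
          have e2 := hoth v u (fun h => h2 ⟨h.2, h.1⟩) (fun h => h1 ⟨h.2, h.1⟩)
          simp [sgn, ← e1, ← e2, h1, h2]
    rw [hsgn]
    ring
  -- fresh voters
  set a' : ℕ := N.sup id + 1 with ha'def
  set b' : ℕ := N.sup id + 2 with hb'def
  have ha' : a' ∉ N := by
    intro h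
    have h2 := Finset.le_sup (f := id) h
    simp only [id_eq] at h2
    omega
  have hb' : b' ∉ N := by
    intro h
    have h2 := Finset.le_sup (f := id) h
    simp only [id_eq] at h2
    omega
  have hab : a' ≠ b' := by omega
  set Pr : StrictPref A := bPref x y (fun z => f N R z < f N R' z) 1 2 with hPr
  set PrS : StrictPref A := bPref x y (fun z => f N R z < f N R' z) 2 1 with hPrS
  set PrR : StrictPref A := bPrefRev x y (fun z => f N R z < f N R' z) 1 2 with hPrR
  set Q := extProf N R a' b' Pr PrR with hQ
  set Q2 := extProf N R a' b' PrS PrR with hQ2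
  have hN2ne : (insert a' (insert b' N)).Nonempty := ⟨a', Finset.mem_insert_self _ _⟩
  have hmq1 : ∀ u v : A, margin N R u v = margin (insert a' (insert b' N)) Q u v := by
    intro u v
    rw [hQ, margin_ext N R a' b' ha' hb' hab, hPr, hPrR, sgn_rev]
    ring
  have hf1 : f N R = f (insert a' (insert b' N)) Q := hpw N _ hN hN2ne R Q hmq1
  have hmq2 : ∀ u v : A, margin N R' u v = margin (insert a' (insert b' N)) Q2 u v := by
    intro u v
    rw [hQ2, margin_ext N R a' b' ha' hb' hab, hPrS, hPrR, sgn_rev, hmarg u v]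
    have hd := sgn_swap_diff hxy (fun z => f N R z < f N R' z) u v
    linarith
  have hf2 : f N R' = f (insert a' (insert b' N)) Q2 := hpw N _ hN hN2ne R' Q2 hmq2
  have ha'mem : a' ∈ insert a' (insert b' N) := Finset.mem_insert_self _ _
  have hagree : ∀ j (hj : j ∈ insert a' (insert b' N)), j ≠ a' → Q j hj = Q2 j hj := by
    intro j hj hja
    rw [hQ, hQ2]
    unfold extProf
    rw [dif_neg hja, dif_neg hja]
  have hnsd := hsp _ hN2ne Q Q2 a' ha'mem hagree
  have hQa : Q a' ha'mem = Pr := by rw [hQ]; exact extProf_self _ _ _ _ _ _ _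
  rw [hQa, ← hf1, ← hf2] at hnsd
  have hSD : SD Pr.rel (f N R') (f N R) := by
    rw [hPr]
    exact sd_part hxy hp0 hp1 hq0 hq1 hx0
  have hEq : ∀ z, probUC (f N R) Pr.rel z = probUC (f N R') Pr.rel z := by
    intro z
    rcases eq_or_lt_of_le (hSD z) with h | h
    · exact h
    · exact absurd ⟨hSD, z, h⟩ hnsd
  rw [hPr] at hEq
  exact eq_of_probUC_eq x y (fun z => f N R z < f N R' z) (f N R) (f N R') hEq
end
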